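/- Kučera's lemma: Let $U$ be an effectively open (c.e. open) subset of Cantor space of measure less than $1$ that contains all Martin-Löf non-random sequences. Then a sequence $x$ is Martin-Löf non-random if and only if every tail of $x$ belongs to $U$. -/

import Mathlib

open scoped Classical ENNReal

/-- `f` is partial computable relative to oracle `O`: there is a partial
computable functional `F` that, given the input together with a finite initial
segment of the oracle, may produce the answer; correct on oracle prefixes and
total on the domain of `f`. -/
def PartrecIn {α β : Type} [Primcodable α] [Primcodable β]
    (O : ℕ → Bool) (f : α →. β) : Prop :=
  ∃ F : α × List Bool →. β, Partrec F ∧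
    (∀ a n b, b ∈ F (a, (List.range n).map O) → f a = Part.some b) ∧
    (∀ a b, b ∈ f a → ∃ n, b ∈ F (a, (List.range n).map O))

/-- The trivial (computable) oracle; relativization to it yields the
unrelativized notions. -/
def triv : ℕ → Bool := fun _ => false

/-- A prefix-free machine relative to oracle `O`: a partial `O`-computable map
from binary strings (programs) to natural numbers (coding arbitrary finite
objects), whose domain is prefix-free. -/
structure PrefixMachineIn (O : ℕ → Bool) where
  M : List Bool →. ℕ
  partrec : PartrecIn O M
  prefixFree : ∀ p q : List Bool, (M p).Dom → (M q).Dom → p <+: q → p = q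

/-- The complexity of `x` with respect to machine `U`: the least length of a
program producing `x`. -/
noncomputable def Kof {O : ℕ → Bool} (U : PrefixMachineIn O) (x : ℕ) : ℕ :=
  sInf {n | ∃ p : List Bool, p.length = n ∧ x ∈ U.M p}

/-- `U` is a universal prefix-free machine relative to `O`. -/
def IsUniversal {O : ℕ → Bool} (U : PrefixMachineIn O) : Prop :=
  (∀ x : ℕ, ∃ p : List Bool, x ∈ U.M p) ∧
  ∀ M : PrefixMachineIn O, ∃ c : ℕ, ∀ (p : List Bool) (x : ℕ), x ∈ M.M p →
    ∃ q : List Bool, q.length ≤ p.length + c ∧ x ∈ U.M q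

/-- The length-`n` prefix of an infinite binary sequence, as a finite string. -/
def preSeq (a : ℕ → Bool) (n : ℕ) : List Bool := (List.range n).map a

/-- Code a finite binary string as a natural number. -/
def strCode (u : List Bool) : ℕ := Encodable.encode u

/-- `a` is `K`-trivial with respect to the machine `U`. -/
def KTrivial {O : ℕ → Bool} (U : PrefixMachineIn O) (a : ℕ → Bool) : Prop :=
  ∃ c : ℕ, ∀ n : ℕ, Kof U (strCode (preSeq a n)) ≤ Kof U n + c

/-- The basic cylinder determined by a finite string. -/
def cyl (u : List Bool) : Set (ℕ → Bool) :=
  {x | ∀ i : ℕ, ∀ h : i < u.length, x i = u.get ⟨i, h⟩}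

/-- The (outer) uniform measure on Cantor space: infimum of `∑ 2^{-|c i|}`
over countable coverings by cylinders. -/
noncomputable def cmeas (S : Set (ℕ → Bool)) : ℝ≥0∞ :=
  ⨅ (c : ℕ → List Bool) (_ : S ⊆ ⋃ i, cyl (c i)),
    ∑' i : ℕ, (2 : ℝ≥0∞)⁻¹ ^ (c i).length

/-- A set of strings is computably enumerable relative to `O`. -/
def CEIn {α : Type} [Primcodable α] (O : ℕ → Bool) (S : Set α) : Prop :=
  ∃ f : α →. Unit, PartrecIn O f ∧ ∀ u, u ∈ S ↔ (f u).Dom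

/-- `U` is an `O`-effectively open subset of Cantor space. -/
def EffOpenIn (O : ℕ → Bool) (U : Set (ℕ → Bool)) : Prop :=
  ∃ S : Set (List Bool), CEIn O S ∧ U = ⋃ u ∈ S, cyl u

/-- A Martin-Löf test relative to `O`: a uniformly `O`-effectively open
sequence of sets with `cmeas (U n) ≤ 2 ^ (-n)`. -/
def MLTestIn (O : ℕ → Bool) (U : ℕ → Set (ℕ → Bool)) : Prop :=
  (∃ f : ℕ × List Bool →. Unit, PartrecIn O f ∧
      ∀ n, U n = ⋃ u ∈ {u : List Bool | (f (n, u)).Dom}, cyl u) ∧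
  ∀ n, cmeas (U n) ≤ (2 : ℝ≥0∞)⁻¹ ^ n

/-- Martin-Löf randomness relative to oracle `O`. -/
def MLRandomIn (O : ℕ → Bool) (x : ℕ → Bool) : Prop :=
  ∀ U : ℕ → Set (ℕ → Bool), MLTestIn O U → x ∉ ⋂ n, U n

/-- Turing reducibility between infinite binary sequences. -/
def TuringLE (a b : ℕ → Bool) : Prop :=
  PartrecIn b (fun n => Part.some (a n) : ℕ →. Bool)

/-- The halting problem `𝟎'` as an infinite binary sequence. -/
noncomputable def halting : ℕ → Bool :=
  fun n => decide (((Denumerable.ofNat Nat.Partrec.Code n).eval n).Dom)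

/-- The tail of `x` starting at position `k`. -/
def seqTail (x : ℕ → Bool) (k : ℕ) : ℕ → Bool := fun n => x (n + k)


/-!
A non-random sequence has non-random tails: if `x` lies in a Martin-Löf test `W`, then
`seqTail x k` lies in the test generated by the strings of `W (n + k)` with their first `k` bits
cut off, and cutting `k` bits off the strings of a cover multiplies its weight by at most `2 ^ k`.
Hence all tails of a non-random `x` lie in `U`.

Conversely, `U` is generated by a computably enumerable prefix-free set `A` of strings: at stage
`n` the `n`-th enumerated string is replaced by those of its extensions of a common, large length
that avoid the strings enumerated before. The cylinders of `A` are disjoint, so comparing `cmeas`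
with the product measure `coinMeasure` bounds the Kraft sum `q = ∑_{u ∈ A} 2^{-|u|}` by
`cmeas U < 1`. If every tail of `x` lies in `U`, then for every `j` the sequence `x` starts with
a concatenation of `j` words of `A`. Choosing `k` with `q ^ k ≤ 1/2`, the sets generated by
`A ^ (k * m)` have measure at most `q ^ (k * m) ≤ 2 ^ (-m)`, so they form a Martin-Löf test
containing `x`.
-/

open MeasureTheory

theorem mem_cyl_iff_preSeq {x : ℕ → Bool} {u : List Bool} :
    x ∈ cyl u ↔ preSeq x u.length = u := by
  rw [List.ext_get_iff]
  simp [cyl, preSeq]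

theorem preSeq_mem_cyl (x : ℕ → Bool) (n : ℕ) : x ∈ cyl (preSeq x n) := by
  rw [mem_cyl_iff_preSeq]; simp [preSeq]

theorem preSeq_add (x : ℕ → Bool) (m n : ℕ) :
    preSeq x (m + n) = preSeq x m ++ preSeq (seqTail x m) n := by
  simp [preSeq, seqTail, List.range_add, Nat.add_comm]

theorem take_preSeq (x : ℕ → Bool) (m n : ℕ) : (preSeq x n).take m = preSeq x (min m n) := by
  simp [preSeq, ← List.map_take]

theorem cyl_subset_cyl {u v : List Bool} (h : u <+: v) : cyl v ⊆ cyl u := by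
  intro x hx
  rw [mem_cyl_iff_preSeq] at hx ⊢
  calc preSeq x u.length = (preSeq x v.length).take u.length := by
        rw [take_preSeq, min_eq_left h.length_le]
    _ = u := by rw [hx, ← List.prefix_iff_eq_take.1 h]

theorem prefix_preSeq_of_mem_cyl {x : ℕ → Bool} {u : List Bool} {n : ℕ} (hx : x ∈ cyl u)
    (hn : u.length ≤ n) : u <+: preSeq x n := by
  rw [List.prefix_iff_eq_take, take_preSeq, min_eq_left (by simpa [preSeq] using hn)]
  exact (mem_cyl_iff_preSeq.1 hx).symm

theorem disjoint_cyl_of_not_prefix {u v : List Bool} (huv : ¬ u <+: v) (hvu : ¬ v <+: u) :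
    Disjoint (cyl u) (cyl v) := by
  refine Set.disjoint_left.2 fun x hu hv => ?_
  rcases le_total u.length v.length with h | h
  · exact huv (mem_cyl_iff_preSeq.1 hv ▸ prefix_preSeq_of_mem_cyl hu h)
  · exact hvu (mem_cyl_iff_preSeq.1 hu ▸ prefix_preSeq_of_mem_cyl hv h)

theorem mem_cyl_append {x : ℕ → Bool} {a s : List Bool} :
    x ∈ cyl (a ++ s) ↔ x ∈ cyl a ∧ seqTail x a.length ∈ cyl s := by
  simp only [mem_cyl_iff_preSeq, List.length_append, preSeq_add]
  exact ⟨fun h => List.append_inj h (by simp [preSeq]), fun ⟨h₁, h₂⟩ => by rw [h₁, h₂]⟩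

theorem seqTail_seqTail (x : ℕ → Bool) (m n : ℕ) : seqTail (seqTail x m) n = seqTail x (n + m) := by
  funext i; simp [seqTail, Nat.add_assoc]

theorem seqTail_mem_cyl_drop {x : ℕ → Bool} {u : List Bool} (hx : x ∈ cyl u) (k : ℕ) :
    seqTail x k ∈ cyl (u.drop k) := by
  intro i hi
  have := hx (i + k) (by simp at hi; omega)
  simpa [seqTail, Nat.add_comm k i] using this

theorem exists_seqTail_eq_of_mem_cyl_drop {y : ℕ → Bool} {u : List Bool} {k : ℕ}
    (hy : y ∈ cyl (u.drop k)) : ∃ x ∈ cyl u, seqTail x k = y := by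
  refine ⟨fun i => if i < k then u.getD i false else y (i - k), fun i hi => ?_, ?_⟩
  · show (if i < k then _ else _) = _
    split_ifs with hik
    · simp [hi]
    · have := hy (i - k) (by simp; omega)
      simpa [Nat.add_sub_cancel' (not_lt.1 hik)] using this
  · funext n; simp [seqTail]

theorem cyl_eq_pi (u : List Bool) :
    cyl u = Set.pi ↑(Finset.range u.length) fun i => {u.getD i false} := by
  ext x
  simp +contextual [cyl, Set.mem_pi]

noncomputable def kraftSum (A : Set (List Bool)) : ℝ≥0∞ := ∑' u : A, 2⁻¹ ^ u.1.length

theorem two_pow_mul_inv_two_pow_add (n k : ℕ) : (2 : ℝ≥0∞) ^ k * 2⁻¹ ^ (n + k) = 2⁻¹ ^ n := by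
  rw [pow_add, mul_left_comm, ← mul_pow, ENNReal.mul_inv_cancel two_ne_zero ENNReal.ofNat_ne_top,
    one_pow, mul_one]

theorem inv_two_pow_sub_le (n k : ℕ) : (2 : ℝ≥0∞)⁻¹ ^ (n - k) ≤ 2 ^ k * 2⁻¹ ^ n := by
  rw [← two_pow_mul_inv_two_pow_add (n - k) k]
  exact mul_le_mul_right (pow_le_pow_right_of_le_one' (ENNReal.inv_le_one.2 one_le_two)
    le_tsub_add) _

theorem tsum_inv_two_pow_add_succ (N : ℕ) : ∑' n : ℕ, (2 : ℝ≥0∞)⁻¹ ^ (n + N + 1) = 2⁻¹ ^ N := by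
  simp_rw [add_right_comm _ N, pow_add (2 : ℝ≥0∞)⁻¹ _ N]
  rw [ENNReal.tsum_mul_right, ENNReal.tsum_geometric_add_one, ENNReal.one_sub_inv_two, inv_inv,
    ENNReal.inv_mul_cancel two_ne_zero ENNReal.ofNat_ne_top, one_mul]

theorem cmeas_mono {S T : Set (ℕ → Bool)} (h : S ⊆ T) : cmeas S ≤ cmeas T :=
  le_iInf₂ fun c hc => iInf₂_le c (h.trans hc)

theorem cmeas_le_tsum {ι : Type*} [Countable ι] {S : Set (ℕ → Bool)} (c : ι → List Bool)
    (hc : S ⊆ ⋃ i, cyl (c i)) : cmeas S ≤ ∑' i, (2 : ℝ≥0∞)⁻¹ ^ (c i).length := by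
  refine ENNReal.le_of_forall_pos_le_add fun ε hε _ => ?_
  obtain ⟨N, hN⟩ := ENNReal.exists_inv_two_pow_lt (a := ε) (by positivity)
  obtain ⟨e, he⟩ := exists_injective_nat ι
  -- `cmeas` only takes `ℕ`-indexed covers: pad the indices outside the range of `e` with
  -- cylinders of total weight `2⁻¹ ^ N`
  let c' : ℕ → List Bool := Function.extend e c fun n => List.replicate (n + N + 1) false
  have hcover : S ⊆ ⋃ n, cyl (c' n) := hc.trans <| Set.iUnion_subset fun i =>
    (he.extend_apply c _ i).symm ▸ Set.subset_iUnion (fun n => cyl (c' n)) (e i)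
  have hweight : ∀ n, (2 : ℝ≥0∞)⁻¹ ^ (c' n).length ≤
      Function.extend e (fun i => 2⁻¹ ^ (c i).length) 0 n + 2⁻¹ ^ (n + N + 1) := by
    intro n
    by_cases hn : ∃ i, e i = n
    · obtain ⟨i, rfl⟩ := hn
      simp [c', he.extend_apply]
    · simp [c', Function.extend_apply' _ _ _ hn]
  calc cmeas S ≤ ∑' n, (2 : ℝ≥0∞)⁻¹ ^ (c' n).length := iInf₂_le c' hcover
    _ ≤ ∑' n, (Function.extend e (fun i => 2⁻¹ ^ (c i).length) 0 n + 2⁻¹ ^ (n + N + 1)) :=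
      ENNReal.tsum_le_tsum hweight
    _ ≤ ∑' i, (2 : ℝ≥0∞)⁻¹ ^ (c i).length + ε := by
      rw [ENNReal.tsum_add, tsum_extend_zero he, tsum_inv_two_pow_add_succ]
      gcongr

theorem cmeas_biUnion_le_kraftSum (A : Set (List Bool)) : cmeas (⋃ u ∈ A, cyl u) ≤ kraftSum A :=
  cmeas_le_tsum (fun u : A => u.1) (by rw [Set.biUnion_eq_iUnion])

theorem cmeas_image_seqTail_le (S : Set (ℕ → Bool)) (k : ℕ) :
    cmeas ((seqTail · k) '' S) ≤ 2 ^ k * cmeas S := by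
  conv_rhs => rw [cmeas, ENNReal.mul_iInf_of_ne (by positivity) (by simp)]
  refine le_iInf fun c => ?_
  rw [ENNReal.mul_iInf_of_ne (by positivity) (by simp)]
  refine le_iInf fun hc => ?_
  have hcover : (seqTail · k) '' S ⊆ ⋃ i, cyl ((c i).drop k) := by
    rintro _ ⟨x, hx, rfl⟩
    obtain ⟨i, hi⟩ := Set.mem_iUnion.1 (hc hx)
    exact Set.mem_iUnion.2 ⟨i, seqTail_mem_cyl_drop hi k⟩
  calc cmeas ((seqTail · k) '' S) ≤ ∑' i, (2 : ℝ≥0∞)⁻¹ ^ ((c i).drop k).length :=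
        cmeas_le_tsum _ hcover
    _ ≤ ∑' i, 2 ^ k * (2 : ℝ≥0∞)⁻¹ ^ (c i).length :=
        ENNReal.tsum_le_tsum fun i => by rw [List.length_drop]; exact inv_two_pow_sub_le _ _
    _ = 2 ^ k * ∑' i, (2 : ℝ≥0∞)⁻¹ ^ (c i).length := ENNReal.tsum_mul_left

noncomputable def coinMeasure : Measure (ℕ → Bool) :=
  Measure.infinitePi fun _ => (PMF.uniformOfFintype Bool).toMeasure

theorem measurableSet_cyl (u : List Bool) : MeasurableSet (cyl u) := by
  rw [cyl_eq_pi]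
  exact MeasurableSet.pi (Finset.countable_toSet _) fun _ _ => measurableSet_singleton _

theorem coinMeasure_cyl (u : List Bool) : coinMeasure (cyl u) = 2⁻¹ ^ u.length := by
  rw [cyl_eq_pi, coinMeasure, Measure.infinitePi_pi _ fun _ _ => measurableSet_singleton _]
  simp [PMF.toMeasure_apply_singleton _ _ (measurableSet_singleton _)]

theorem coinMeasure_le_cmeas (S : Set (ℕ → Bool)) : coinMeasure S ≤ cmeas S :=
  le_iInf₂ fun c hc => calc
    coinMeasure S ≤ ∑' i, coinMeasure (cyl (c i)) := (measure_mono hc).trans (measure_iUnion_le _)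
    _ = _ := by simp_rw [coinMeasure_cyl]

theorem kraftSum_le_cmeas {A : Set (List Bool)} (hA : A.Pairwise fun u v => ¬ u <+: v) :
    kraftSum A ≤ cmeas (⋃ u ∈ A, cyl u) := calc
  kraftSum A = coinMeasure (⋃ u ∈ A, cyl u) := by
    rw [measure_biUnion A.to_countable (fun u hu v hv huv => ?_) fun u _ => measurableSet_cyl u]
    · simp_rw [coinMeasure_cyl]; rfl
    · exact disjoint_cyl_of_not_prefix (hA hu hv huv) (hA hv hu huv.symm)
  _ ≤ _ := coinMeasure_le_cmeas _

theorem kraftSum_image2_append_le (A B : Set (List Bool)) :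
    kraftSum (Set.image2 (· ++ ·) A B) ≤ kraftSum A * kraftSum B := by
  have hsurj : Function.Surjective fun p : A × B =>
      (⟨p.1.1 ++ p.2.1, Set.mem_image2_of_mem p.1.2 p.2.2⟩ : Set.image2 (· ++ ·) A B) := by
    rintro ⟨u, a, ha, b, hb, rfl⟩
    exact ⟨(⟨a, ha⟩, ⟨b, hb⟩), rfl⟩
  calc kraftSum (Set.image2 (· ++ ·) A B)
      ≤ ∑' p : A × B, (2 : ℝ≥0∞)⁻¹ ^ (p.1.1 ++ p.2.1).length :=
        ENNReal.tsum_le_tsum_comp_of_surjective hsurj fun u => 2⁻¹ ^ u.1.length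
    _ = ∑' (a : A) (b : B), (2 : ℝ≥0∞)⁻¹ ^ a.1.length * 2⁻¹ ^ b.1.length := by
      rw [← ENNReal.tsum_prod]
      simp [pow_add]
    _ = kraftSum A * kraftSum B := by
      simp_rw [ENNReal.tsum_mul_left, ENNReal.tsum_mul_right]
      rfl

theorem kraftSum_pow_le (A : Language Bool) (n : ℕ) : kraftSum (A ^ n) ≤ kraftSum A ^ n := by
  induction n with
  | zero => rw [pow_zero, pow_zero, Language.one_def]; simp [kraftSum]
  | succ n ih =>
    rw [pow_succ, pow_succ, Language.mul_def]
    exact (kraftSum_image2_append_le _ _).trans (by gcongr)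

theorem exists_mem_pow_of_forall_seqTail_mem {A : Language Bool} {x : ℕ → Bool}
    (hx : ∀ k, seqTail x k ∈ ⋃ u ∈ A, cyl u) (n : ℕ) : ∃ u ∈ A ^ n, x ∈ cyl u := by
  induction n generalizing x with
  | zero => exact ⟨[], by simp [Language.mem_one], fun i hi => absurd hi (Nat.not_lt_zero i)⟩
  | succ n ih =>
    obtain ⟨a, ha, hxa⟩ := Set.mem_iUnion₂.1 (hx 0)
    obtain ⟨s, hs, hts⟩ := ih (x := seqTail x a.length) fun k => by
      rw [seqTail_seqTail]; exact hx (k + a.length)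
    exact ⟨a ++ s, pow_succ' A n ▸ Language.append_mem_mul ha hs, mem_cyl_append.2 ⟨hxa, hts⟩⟩

theorem List.exists_bound_of_forall_mem_exists {β : Type*} {P : β → ℕ → Prop} :
    ∀ {L : List β}, (∀ b ∈ L, ∃ n, P b n) → ∃ N, ∀ b ∈ L, ∃ n < N, P b n
  | [], _ => ⟨0, by simp⟩
  | b :: L, h => by
    obtain ⟨n, hn⟩ := h b List.mem_cons_self
    obtain ⟨N, hN⟩ :=
      List.exists_bound_of_forall_mem_exists fun c hc => h c (List.mem_cons_of_mem b hc)
    refine ⟨max (n + 1) N, fun c hc => ?_⟩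
    rcases List.mem_cons.1 hc with rfl | hc
    · exact ⟨n, by omega, hn⟩
    · obtain ⟨m, hm, hPm⟩ := hN c hc
      exact ⟨m, by omega, hPm⟩

section Enumerable

variable {α β : Type*} [Primcodable α] [Primcodable β]

open Primrec Encodable

theorem REPred.exists_primrecRel {p : α → Prop} (hp : REPred p) :
    ∃ R : α → ℕ → Prop, PrimrecRel R ∧ ∀ a, p a ↔ ∃ n, R a n := by
  obtain ⟨c, hc⟩ := Nat.Partrec.Code.exists_code.1 hp
  refine ⟨fun a k => (Nat.Partrec.Code.evaln k c (encode a)).isSome, ?_, fun a => ?_⟩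
  · exact Primrec₂.primrecRel (option_isSome.comp (Nat.Partrec.Code.primrec_evaln.comp
      ((snd.pair (const c)).pair (Primrec.encode.comp fst))) |>.of_eq fun _ => by simp)
  · have hdom : p a ↔ (Nat.Partrec.Code.eval c (encode a)).Dom := by
      simp only [hc, encodek, Part.coe_some, Part.bind_some, Part.map_Dom]
      exact ⟨fun h => ⟨h, trivial⟩, fun h => h.1⟩
    simp only [hdom, Part.dom_iff_mem, Nat.Partrec.Code.evaln_complete, Option.isSome_iff_exists]
    exact exists_comm

theorem REPred.of_exists_primrecRel {R : α → ℕ → Prop} (hR : PrimrecRel R) :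
    REPred fun a => ∃ n, R a n := by
  have : Partrec fun a => Nat.rfindOpt fun n => if R a n then some () else none :=
    Partrec.rfindOpt (Primrec.ite hR (const _) (const _)).to_comp
  exact this.dom_re.of_eq fun a => by simp [Nat.rfindOpt_dom]

theorem PrimrecPred.rePred {p : α → Prop} (hp : PrimrecPred p) : REPred p :=
  hp.computablePred.to_re

theorem REPred.comp {p : β → Prop} (hp : REPred p) {f : α → β} (hf : Computable f) :
    REPred fun a => p (f a) :=
  Partrec.comp hp hf

theorem REPred.and {p q : α → Prop} (hp : REPred p) (hq : REPred q) :
    REPred fun a => p a ∧ q a := by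
  obtain ⟨R, hR, hpR⟩ := hp.exists_primrecRel
  obtain ⟨S, hS, hqS⟩ := hq.exists_primrecRel
  refine (REPred.of_exists_primrecRel (R := fun a n => R a n.unpair.1 ∧ S a n.unpair.2)
    ((hR.comp fst (fst.comp (unpair.comp snd))).and
      (hS.comp fst (snd.comp (unpair.comp snd))))).of_eq fun a => ?_
  rw [hpR, hqS]
  exact ⟨fun ⟨n, h⟩ => ⟨⟨_, h.1⟩, ⟨_, h.2⟩⟩,
    fun ⟨⟨m, hm⟩, ⟨n, hn⟩⟩ => ⟨Nat.pair m n, by simpa [Nat.unpair_pair] using ⟨hm, hn⟩⟩⟩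

theorem REPred.exists {p : α → β → Prop} (hp : REPred fun q : α × β => p q.1 q.2) :
    REPred fun a => ∃ b, p a b := by
  obtain ⟨R, hR, hpR⟩ := hp.exists_primrecRel
  have hR' : PrimrecRel fun (b : β) (q : α × ℕ) => R (q.1, b) q.2 :=
    hR.comp ((fst.comp snd).pair fst) (snd.comp snd)
  have hdec : Primrec fun q : α × ℕ => (decode q.2.unpair.1 : Option β).toList :=
    optionToList.comp (Primrec.decode.comp (fst.comp (unpair.comp snd)))
  refine (REPred.of_exists_primrecRel
    (R := fun a n => ∃ b ∈ (decode n.unpair.1 : Option β).toList, R (a, b) n.unpair.2)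
    (hR'.exists_mem_list.comp hdec (fst.pair (snd.comp (unpair.comp snd))))).of_eq fun a => ?_
  constructor
  · rintro ⟨n, b, -, hb⟩
    exact ⟨b, (hpR (a, b)).2 ⟨_, hb⟩⟩
  · rintro ⟨b, hb⟩
    obtain ⟨n, hn⟩ := (hpR (a, b)).1 hb
    exact ⟨Nat.pair (encode b) n, b, by simp [encodek], by simpa using hn⟩

theorem REPred.forall_mem_list {p : α → β → Prop} (hp : REPred fun q : α × β => p q.1 q.2) :
    REPred fun q : α × List β => ∀ b ∈ q.2, p q.1 b := by
  obtain ⟨R, hR, hpR⟩ := hp.exists_primrecRel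
  have hR₁ : PrimrecRel fun (n : ℕ) (w : β × (α × List β) × ℕ) => R (w.2.1.1, w.1) n :=
    hR.comp ((fst.comp (fst.comp (snd.comp snd))).pair (fst.comp snd)) fst
  have hR₂ : PrimrecRel fun (b : β) (z : (α × List β) × ℕ) =>
      ∃ n ∈ List.range z.2, R (z.1.1, b) n :=
    hR₁.exists_mem_list.comp (list_range.comp (snd.comp snd)) .id
  have hR₃ : PrimrecRel fun (q : α × List β) (N : ℕ) =>
      ∀ b ∈ q.2, ∃ n ∈ List.range N, R (q.1, b) n :=
    hR₂.forall_mem_list.comp (snd.comp fst) .id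
  refine (REPred.of_exists_primrecRel hR₃).of_eq fun q => ?_
  simp only [List.mem_range]
  constructor
  · exact fun ⟨N, hN⟩ b hb => (hpR (q.1, b)).2 ((hN b hb).imp fun _ => And.right)
  · exact fun h => List.exists_bound_of_forall_mem_exists fun b hb => (hpR (q.1, b)).1 (h b hb)

theorem REPred.exists_primrec_enum {p : α → Prop} (hp : REPred p) :
    ∃ g : ℕ → Option α, Primrec g ∧ ∀ a, p a ↔ ∃ n, g n = some a := by
  obtain ⟨R, hR, hpR⟩ := hp.exists_primrecRel
  have hguard : PrimrecRel fun (q : ℕ × α) (a : α) => R a q.1.unpair.2 :=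
    hR.comp snd (snd.comp (unpair.comp (fst.comp fst)))
  refine ⟨fun n => (decode n.unpair.1 : Option α).bind (Option.guard (R · n.unpair.2)),
    option_bind (Primrec.decode.comp (fst.comp unpair)) (option_guard hguard snd), fun a => ?_⟩
  rw [hpR]
  constructor
  · rintro ⟨n, hn⟩
    exact ⟨Nat.pair (encode a) n, by simp [encodek, hn]⟩
  · rintro ⟨n, hn⟩
    simp only [Option.bind_eq_some_iff, Option.guard_eq_some_iff] at hn
    obtain ⟨_, -, rfl, h⟩ := hn
    exact ⟨_, of_decide_eq_true h⟩

theorem REPred.mem_pow {A : Language α} (hA : REPred (· ∈ A)) :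
    REPred fun q : ℕ × List α => q.2 ∈ A ^ q.1 := by
  refine (REPred.exists (p := fun (q : ℕ × List α) (L : List (List α)) =>
    (q.2 = L.flatten ∧ L.length = q.1) ∧ ∀ y ∈ L, y ∈ A) (REPred.and ?_ ?_)).of_eq
    fun q => by simp only [Language.mem_pow, and_assoc]
  · exact ((Primrec.eq.comp (snd.comp fst) (list_flatten.comp snd)).and
      (Primrec.eq.comp (list_length.comp snd) (fst.comp fst))).rePred
  · exact (REPred.forall_mem_list (p := fun (_ : Unit) y => y ∈ A) (hA.comp Computable.snd)).comp
      ((const ()).pair snd).to_comp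

theorem primrecRel_isPrefix : PrimrecRel fun u v : List α => u <+: v :=
  (Primrec.eq.comp fst (list_take.comp (list_length.comp fst) snd)).of_eq
    fun _ => List.prefix_iff_eq_take.symm

end Enumerable

section Oracle

variable {α β : Type} [Primcodable α] [Primcodable β]

open Primrec

theorem Partrec.partrecIn {f : α →. β} (hf : Partrec f) (O : ℕ → Bool) : PartrecIn O f :=
  ⟨fun q => f q.1, hf.comp Computable.fst, fun _ _ _ hb => Part.eq_some_iff.2 hb,
    fun _ _ hb => ⟨0, hb⟩⟩

theorem PartrecIn.rePred_dom {f : α →. β} (hf : PartrecIn triv f) : REPred fun a => (f a).Dom := by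
  obtain ⟨F, hF, hsound, hcomplete⟩ := hf
  have horacle : Primrec fun q : α × ℕ => (q.1, (List.range q.2).map triv) :=
    fst.pair (list_map (list_range.comp snd) (const false).to₂)
  refine (REPred.exists (p := fun a n => (F (a, (List.range n).map triv)).Dom)
    (hF.dom_re.comp horacle.to_comp)).of_eq fun a => ⟨fun ⟨n, hn⟩ => ?_, fun ha => ?_⟩
  · rw [hsound a n _ (Part.get_mem hn)]; trivial
  · obtain ⟨n, hn⟩ := hcomplete a _ (Part.get_mem ha)
    exact ⟨n, Part.dom_iff_mem.2 ⟨_, hn⟩⟩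

end Oracle

theorem EffOpenIn.exists_rePred {U : Set (ℕ → Bool)} (hU : EffOpenIn triv U) :
    ∃ S : Set (List Bool), REPred (· ∈ S) ∧ U = ⋃ u ∈ S, cyl u :=
  let ⟨S, ⟨_, hf, hSf⟩, hUS⟩ := hU
  ⟨S, hf.rePred_dom.of_eq fun u => (hSf u).symm, hUS⟩

theorem MLTestIn.exists_rePred {W : ℕ → Set (ℕ → Bool)} (hW : MLTestIn triv W) :
    ∃ R : ℕ → List Bool → Prop, REPred (fun q : ℕ × List Bool => R q.1 q.2) ∧
      ∀ n, W n = ⋃ u ∈ {u | R n u}, cyl u :=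
  let ⟨⟨f, hf, hWf⟩, _⟩ := hW
  ⟨fun n u => (f (n, u)).Dom, hf.rePred_dom, hWf⟩

theorem MLTestIn.of_rePred (O : ℕ → Bool) {R : ℕ → List Bool → Prop}
    (hR : REPred fun q : ℕ × List Bool => R q.1 q.2)
    (hμ : ∀ n, cmeas (⋃ u ∈ {u | R n u}, cyl u) ≤ 2⁻¹ ^ n) :
    MLTestIn O fun n => ⋃ u ∈ {u | R n u}, cyl u := by
  refine ⟨⟨_, hR.partrecIn O, fun n => ?_⟩, hμ⟩
  congr! with u
  exact ⟨fun h => ⟨h, trivial⟩, fun h => h.1⟩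

theorem not_mlRandomIn_of_rePred (O : ℕ → Bool) {R : ℕ → List Bool → Prop}
    (hR : REPred fun q : ℕ × List Bool => R q.1 q.2)
    (hμ : ∀ n, cmeas (⋃ u ∈ {u | R n u}, cyl u) ≤ 2⁻¹ ^ n) {x : ℕ → Bool}
    (hx : ∀ n, x ∈ ⋃ u ∈ {u | R n u}, cyl u) : ¬ MLRandomIn O x :=
  fun hrand => hrand _ (MLTestIn.of_rePred O hR hμ) (Set.mem_iInter.2 hx)

theorem biUnion_cyl_drop_subset_image (S : Set (List Bool)) (k : ℕ) :
    ⋃ u ∈ {u | ∃ v ∈ S, v.drop k = u}, cyl u ⊆ (seqTail · k) '' ⋃ v ∈ S, cyl v := by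
  simp only [Set.iUnion_subset_iff]
  rintro _ ⟨v, hv, rfl⟩ y hy
  obtain ⟨x, hx, rfl⟩ := exists_seqTail_eq_of_mem_cyl_drop hy
  exact ⟨x, Set.mem_biUnion hv hx, rfl⟩

open Primrec in
theorem not_mlRandomIn_seqTail {x : ℕ → Bool} (hx : ¬ MLRandomIn triv x) (k : ℕ) :
    ¬ MLRandomIn triv (seqTail x k) := by
  obtain ⟨W, hW, hxW⟩ : ∃ W, MLTestIn triv W ∧ x ∈ ⋂ n, W n := by
    simpa [MLRandomIn] using hx
  obtain ⟨R, hR, hWR⟩ := hW.exists_rePred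
  have hR' : REPred fun q : ℕ × List Bool => ∃ v, R (q.1 + k) v ∧ v.drop k = q.2 := by
    refine REPred.exists (p := fun (q : ℕ × List Bool) (v : List Bool) =>
      R (q.1 + k) v ∧ v.drop k = q.2) (REPred.and ?_ ?_)
    · exact hR.comp ((nat_add.comp (fst.comp fst) (const k)).pair snd).to_comp
    · exact (Primrec.eq.comp (list_drop.comp (const k) snd) (snd.comp fst)).rePred
  refine not_mlRandomIn_of_rePred triv (R := fun n u => ∃ v, R (n + k) v ∧ v.drop k = u) hR'
    (fun n => ?_) (fun n => ?_)
  · calc cmeas _ ≤ cmeas ((seqTail · k) '' W (n + k)) := by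
          rw [hWR]; exact cmeas_mono (biUnion_cyl_drop_subset_image _ k)
      _ ≤ 2 ^ k * 2⁻¹ ^ (n + k) := (cmeas_image_seqTail_le _ k).trans (by gcongr; exact hW.2 _)
      _ = 2⁻¹ ^ n := two_pow_mul_inv_two_pow_add n k
  · have hxn := Set.mem_iInter.1 hxW (n + k)
    rw [hWR] at hxn
    obtain ⟨v, hv, hxv⟩ := Set.mem_iUnion₂.1 hxn
    exact Set.mem_biUnion ⟨v, hv, rfl⟩ (seqTail_mem_cyl_drop hxv k)

section PrefixFree

variable (g : ℕ → Option (List Bool))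

-- Strings of stage `n` are at least as long as every earlier `g m`, which is what makes
-- the stages prefix-free; any primitive recursive bound would do instead of the sum.
def stageLength (n : ℕ) : ℕ :=
  ((List.range (n + 1)).map fun m => ((g m).map List.length).getD 0).sum

def IsPrefixFreeStage (v : List Bool) (n : ℕ) : Prop :=
  (∃ u ∈ g n, u <+: v) ∧ v.length = stageLength g n ∧ ∀ m < n, ∀ u ∈ g m, ¬ u <+: v

def prefixFreeRefinement : Language Bool := {v | ∃ n, IsPrefixFreeStage g v n}

variable {g}

theorem length_le_stageLength {m n : ℕ} {u : List Bool} (hmn : m ≤ n) (hu : u ∈ g m) :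
    u.length ≤ stageLength g n :=
  List.le_sum_of_mem (List.mem_map.2
    ⟨m, List.mem_range.2 (Nat.lt_succ_of_le hmn), by simp [Option.mem_def.1 hu]⟩)

theorem IsPrefixFreeStage.eq_of_isPrefix {v v' : List Bool} {n n' : ℕ}
    (hv : IsPrefixFreeStage g v n) (hv' : IsPrefixFreeStage g v' n') (h : v <+: v') : v = v' := by
  obtain ⟨⟨u, hu, huv⟩, hlen, havoid⟩ := hv
  obtain ⟨⟨u', hu', hu'v'⟩, hlen', havoid'⟩ := hv'
  rcases lt_trichotomy n n' with hlt | rfl | hlt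
  · exact absurd (huv.trans h) (havoid' n hlt u hu)
  · exact h.eq_of_length (hlen.trans hlen'.symm)
  · have hu'v : u' <+: v := List.prefix_of_prefix_length_le hu'v' h
      (hlen ▸ length_le_stageLength hlt.le hu')
    exact absurd hu'v (havoid n' hlt u' hu')

theorem prefixFreeRefinement_pairwise :
    Set.Pairwise (prefixFreeRefinement g) fun u v => ¬ u <+: v :=
  fun _ ⟨_, hv⟩ _ ⟨_, hv'⟩ hne h => hne (hv.eq_of_isPrefix hv' h)

theorem biUnion_prefixFreeRefinement {S : Set (List Bool)} (hS : ∀ u, u ∈ S ↔ ∃ n, g n = some u) :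
    ⋃ v ∈ prefixFreeRefinement g, cyl v = ⋃ u ∈ S, cyl u := by
  apply subset_antisymm
  · refine Set.iUnion₂_subset fun v ⟨n, ⟨u, hu, huv⟩, _⟩ => ?_
    exact (cyl_subset_cyl huv).trans (Set.subset_biUnion_of_mem ((hS u).2 ⟨n, hu⟩))
  · refine Set.iUnion₂_subset fun u hu x hxu => ?_
    have hex : ∃ n, ∃ u ∈ g n, x ∈ cyl u := ((hS u).1 hu).imp fun n hn => ⟨u, hn, hxu⟩
    obtain ⟨u', hu', hxu'⟩ := Nat.find_spec hex
    refine Set.mem_biUnion (x := preSeq x (stageLength g (Nat.find hex)))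
      ⟨Nat.find hex, ⟨u', hu', prefix_preSeq_of_mem_cyl hxu' (length_le_stageLength le_rfl hu')⟩,
        by simp [preSeq], fun m hm w hw hwx => ?_⟩ (preSeq_mem_cyl x _)
    exact Nat.find_min hex hm ⟨w, hw, cyl_subset_cyl hwx (preSeq_mem_cyl x _)⟩

open Primrec

theorem primrec_stageLength (hg : Primrec g) : Primrec (stageLength g) := by
  have hlen : Primrec₂ fun (_ : ℕ) m => ((g m).map List.length).getD 0 :=
    option_getD.comp (option_map (hg.comp snd) (list_length.comp snd).to₂) (const 0)
  exact list_foldr (list_map (list_range.comp succ) hlen) (const 0)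
    (nat_add.comp (fst.comp snd) (snd.comp snd)).to₂

theorem primrecRel_isPrefixFreeStage (hg : Primrec g) : PrimrecRel (IsPrefixFreeStage g) := by
  have hopt : Primrec fun m => (g m).toList := optionToList.comp hg
  have hextends : PrimrecRel fun (v : List Bool) n => ∃ u ∈ (g n).toList, u <+: v :=
    primrecRel_isPrefix.exists_mem_list.comp (hopt.comp snd) fst
  have hlength : PrimrecRel fun (v : List Bool) n => v.length = stageLength g n :=
    Primrec.eq.comp (list_length.comp fst) ((primrec_stageLength hg).comp snd)
  have havoid₁ : PrimrecRel fun m (v : List Bool) => ∀ u ∈ (g m).toList, ¬ u <+: v :=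
    (PrimrecRel.forall_mem_list (R := fun u v : List Bool => ¬ u <+: v)
      (PrimrecPred.not primrecRel_isPrefix)).comp (hopt.comp fst) snd
  have havoid : PrimrecRel fun (v : List Bool) n =>
      ∀ m ∈ List.range n, ∀ u ∈ (g m).toList, ¬ u <+: v :=
    havoid₁.forall_mem_list.comp (list_range.comp snd) fst
  exact (hextends.and (hlength.and havoid)).of_eq fun _ => by simp [IsPrefixFreeStage]

end PrefixFree

theorem exists_prefixFree_rePred_biUnion_eq {S : Set (List Bool)} (hS : REPred (· ∈ S)) :
    ∃ A : Language Bool, REPred (· ∈ A) ∧ Set.Pairwise A (fun u v => ¬ u <+: v) ∧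
      ⋃ v ∈ A, cyl v = ⋃ u ∈ S, cyl u :=
  let ⟨_, hg, hgS⟩ := hS.exists_primrec_enum
  ⟨_, REPred.of_exists_primrecRel (primrecRel_isPrefixFreeStage hg), prefixFreeRefinement_pairwise,
    biUnion_prefixFreeRefinement hgS⟩

theorem not_mlRandomIn_of_forall_seqTail_mem {U : Set (ℕ → Bool)} (hU : EffOpenIn triv U)
    (hμ : cmeas U < 1) {x : ℕ → Bool} (hx : ∀ k, seqTail x k ∈ U) : ¬ MLRandomIn triv x := by
  obtain ⟨S, hS, rfl⟩ := hU.exists_rePred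
  obtain ⟨A, hA, hApf, hAS⟩ := exists_prefixFree_rePred_biUnion_eq hS
  rw [← hAS] at hμ hx
  have hq : kraftSum A < 1 := (kraftSum_le_cmeas hApf).trans_lt hμ
  obtain ⟨k, hk⟩ : ∃ k, kraftSum A ^ k ≤ 2⁻¹ :=
    ((ENNReal.tendsto_pow_atTop_nhds_zero_of_lt_one hq).eventually
      (ge_mem_nhds (by norm_num))).exists
  have hR : REPred fun q : ℕ × List Bool => q.2 ∈ A ^ (k * q.1) :=
    hA.mem_pow.comp ((Primrec.nat_mul.comp (Primrec.const k) Primrec.fst).pair Primrec.snd).to_comp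
  refine not_mlRandomIn_of_rePred triv (R := fun m u => u ∈ A ^ (k * m)) hR
    (fun m => ?_) (fun m => ?_)
  · calc cmeas _ ≤ kraftSum (A ^ (k * m)) := cmeas_biUnion_le_kraftSum _
      _ ≤ (kraftSum A ^ k) ^ m := (kraftSum_pow_le A _).trans_eq (pow_mul _ _ _)
      _ ≤ 2⁻¹ ^ m := by gcongr
  · obtain ⟨u, hu, hxu⟩ := exists_mem_pow_of_forall_seqTail_mem hx (k * m)
    exact Set.mem_biUnion hu hxu

/-- Kučera's lemma: if `U` is an effectively open set of measure
less than `1` containing all Martin-Löf non-random sequences, then `x` is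
non-random iff every tail of `x` belongs to `U`. -/
theorem kucera_lemma (U : Set (ℕ → Bool))
    (hopen : EffOpenIn triv U) (hmeas : cmeas U < 1)
    (hcontains : ∀ y : ℕ → Bool, ¬ MLRandomIn triv y → y ∈ U)
    (x : ℕ → Bool) :
    ¬ MLRandomIn triv x ↔ ∀ k : ℕ, seqTail x k ∈ U :=
  ⟨fun hx k => hcontains _ (not_mlRandomIn_seqTail hx k),
    not_mlRandomIn_of_forall_seqTail_mem hopen hmeas⟩
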